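/- Let n ≥ 1 and d ≥ 1 be integers. There exist constants C_1 = C_1(n,d) > 0 and C_2 = C_2(n,d) > 0, depending only on n and d, with the following property: for every C^{d+1} function f on B^n and every C^{d+1} curve ω : [-1,1] → B^n satisfying 0 < ‖dω(t)‖ ≤ 1 for all t ∈ [-1,1] and ν_d(ω) ≤ 1, setting g(t) = f(ω(t)), one has M_{d+1}(f) ≥ C_1 · ( M_{d+1}(g) − C_2 · μ_d(f) · ν_d(ω) ). -/

import Mathlib

open scoped RealInnerProductSpace
noncomputable section

/-- Euclidean space ℝ^n. -/
abbrev En (n : ℕ) := EuclideanSpace ℝ (Fin n)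

/-- Maximum of absolute values of all partial derivatives of order `l` of `f` at `z`. -/
def partialMax (n l : ℕ) (f : En n → ℝ) (z : En n) : ℝ :=
  ⨆ α : Fin l → Fin n,
    |iteratedFDeriv ℝ l f z (fun j => EuclideanSpace.single (α j) (1 : ℝ))|

/-- `M_l(f)`: sup over the closed unit ball of the max partial derivative of order `l`. -/
def Ml (n l : ℕ) (f : En n → ℝ) : ℝ :=
  ⨆ z : Metric.closedBall (0 : En n) 1, partialMax n l f (z : En n)

/-- The class `U_d(Z)` of normalized `C^{d+1}` functions vanishing on `Z`. -/
def Ud (n d : ℕ) (Z : Set (En n)) : Set (En n → ℝ) :=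
  {f | ContDiff ℝ (d + 1 : ℕ) f ∧ (∀ z ∈ Z, f z = 0) ∧ Ml n 0 f = 1}

/-- The `d`-rigidity `RG_d(Z)`. -/
def RG (n d : ℕ) (Z : Set (En n)) : ℝ :=
  sInf (Ml n (d + 1) '' Ud n d Z)

/-- `‖d^k ω(t)‖`: max over coordinates of the `k`-th derivative of the curve `ω` at `t`. -/
def curveDer (n k : ℕ) (ω : ℝ → En n) (t : ℝ) : ℝ :=
  ⨆ i : Fin n, |iteratedDeriv k ω t i|

/-- `ν_d(ω,t)`: max over `2 ≤ k ≤ d+1` of `‖d^k ω(t)‖`. -/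
def nuAt (n d : ℕ) (ω : ℝ → En n) (t : ℝ) : ℝ :=
  ⨆ k : {k : ℕ // 2 ≤ k ∧ k ≤ d + 1}, curveDer n (k : ℕ) ω t

/-- `ν_d(ω)`: max over `t ∈ [-1,1]` of `ν_d(ω,t)`. -/
def nuCurve (n d : ℕ) (ω : ℝ → En n) : ℝ :=
  ⨆ t : Set.Icc (-1 : ℝ) 1, nuAt n d ω (t : ℝ)

/-- `M_k(ω)`: max over `t ∈ [-1,1]` of `‖d^k ω(t)‖`. -/
def Mkc (n k : ℕ) (ω : ℝ → En n) : ℝ :=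
  ⨆ t : Set.Icc (-1 : ℝ) 1, curveDer n k ω (t : ℝ)

/-- Membership in the family `Ω_d(Z,z₀)` of admissible curves. -/
def InOmega (n d : ℕ) (Z : Set (En n)) (z₀ : En n) (ω : ℝ → En n) : Prop :=
  ContDiff ℝ (d + 1 : ℕ) ω ∧
  (∀ t ∈ Set.Icc (-1 : ℝ) 1, ω t ∈ Metric.closedBall (0 : En n) 1) ∧
  (∃ t ∈ Set.Icc (-1 : ℝ) 1, ω t = z₀) ∧
  (∃ z : Fin (d + 1) → En n, Function.Injective z ∧
    ∀ j, z j ∈ Z ∧ ∃ t ∈ Set.Icc (-1 : ℝ) 1, ω t = z j) ∧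
  (∀ t ∈ Set.Icc (-1 : ℝ) 1, 0 < curveDer n 1 ω t ∧ curveDer n 1 ω t ≤ 1) ∧
  nuCurve n d ω ≤ 1

/-- Pointwise `d`-thickness `ν_d(Z,z₀)`. -/
def nuZpt (n d : ℕ) (Z : Set (En n)) (z₀ : En n) : ℝ :=
  sInf (nuCurve n d '' {ω | InOmega n d Z z₀ ω})

/-- `d`-thickness `ν_d(Z)`. -/
def nuZ (n d : ℕ) (Z : Set (En n)) : ℝ :=
  ⨆ z₀ : Metric.sphere (0 : En n) 1, nuZpt n d Z (z₀ : En n)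

/-- Sup of `|P|` over a set `S`. -/
def polySup (n : ℕ) (P : MvPolynomial (Fin n) ℝ) (S : Set (En n)) : ℝ :=
  ⨆ x : S, |MvPolynomial.eval (fun i => (x : En n) i) P|

/-- The Remez constant `R_d(Z)` (value in `[1,∞]`). -/
def Remez (n d : ℕ) (Z : Set (En n)) : ENNReal :=
  sInf {K : ENNReal | 1 ≤ K ∧ ∀ P : MvPolynomial (Fin n) ℝ, P.totalDegree ≤ d →
    ENNReal.ofReal (polySup n P (Metric.closedBall (0 : En n) 1)) ≤
      K * ENNReal.ofReal (polySup n P Z)}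

/-- The inverse Remez constant `R̂_d(Z) = 1/R_d(Z)` (zero when `R_d(Z) = ∞`). -/
def invRemez (n d : ℕ) (Z : Set (En n)) : ℝ :=
  ((Remez n d Z)⁻¹).toReal

/-- The closed axis-parallel grid `ε`-cube with index `α`. -/
def gridCube (n : ℕ) (ε : ℝ) (α : Fin n → ℤ) : Set (En n) :=
  {x | ∀ i, (α i : ℝ) * ε ≤ x i ∧ x i ≤ ((α i : ℝ) + 1) * ε}

/-- The covering number `M(ε,Z)`: the number of grid `ε`-cubes meeting `Z`. -/
def covNum (n : ℕ) (ε : ℝ) (Z : Set (En n)) : ℕ :=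
  Set.ncard {α : Fin n → ℤ | (gridCube n ε α ∩ Z).Nonempty}

/-- Box (entropy) dimension of `Z`. -/
def dimE (n : ℕ) (Z : Set (En n)) : ℝ :=
  Filter.limsup (fun ε : ℝ => Real.log (covNum n ε Z) / Real.log (1 / ε))
    (nhdsWithin 0 (Set.Ioi 0))

/-- The straight line through `z₀` with direction `v`. -/
def lineThrough (n : ℕ) (z₀ v : En n) : Set (En n) :=
  {x | ∃ t : ℝ, x = z₀ + t • v}

/-- Orthogonal projection of `p` onto the line through `z₀` with unit direction `v`. -/
def projLine (n : ℕ) (z₀ v p : En n) : En n :=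
  z₀ + (inner ℝ (p - z₀) v : ℝ) • v

/-- Distance from `p` to the line through `z₀` with unit direction `v`. -/
def distLine (n : ℕ) (z₀ v p : En n) : ℝ :=
  dist p (projLine n z₀ v p)

/-- `ρ(ℓ,𝒵)`: max distance of the `d+1` points to the line. -/
def rhoLine (n d : ℕ) (z₀ v : En n) (z : Fin (d + 1) → En n) : ℝ :=
  ⨆ i, distLine n z₀ v (z i)

/-- `κ(ℓ,𝒵)`: min distance between projections of the `d+1` points onto the line. -/
def kappaLine (n d : ℕ) (z₀ v : En n) (z : Fin (d + 1) → En n) : ℝ :=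
  ⨅ p : {q : Fin (d + 1) × Fin (d + 1) // q.1 ≠ q.2},
    dist (projLine n z₀ v (z (p : Fin (d + 1) × Fin (d + 1)).1))
      (projLine n z₀ v (z (p : Fin (d + 1) × Fin (d + 1)).2))

/-- Pointwise approximate `ad`-thickness `ν̄_d(Z,z₀)`. -/
def barNuZpt (n d : ℕ) (Z : Set (En n)) (z₀ : En n) : ℝ :=
  sInf {m : ℝ | ∃ v : En n, ‖v‖ = 1 ∧
    (lineThrough n z₀ v ∩ Metric.closedBall (0 : En n) (1 / 3)).Nonempty ∧
    ∃ z : Fin (d + 1) → En n, Function.Injective z ∧ (∀ i, z i ∈ Z) ∧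
      m = rhoLine n d z₀ v z / (kappaLine n d z₀ v z) ^ d}

/-- Approximate `ad`-thickness `ν̄_d(Z)`. -/
def barNuZ (n d : ℕ) (Z : Set (En n)) : ℝ :=
  ⨆ z₀ : Metric.sphere (0 : En n) 1, barNuZpt n d Z (z₀ : En n)

/-- The axis-parallel cube with corner `a` and side `s`. -/
def cube (n : ℕ) (a : En n) (s : ℝ) : Set (En n) :=
  {x | ∀ i, a i ≤ x i ∧ x i ≤ a i + s}

/-- `Z` is `h`-dense in the cube with corner `a` and side `s`. -/
def hDense (n : ℕ) (a : En n) (s h : ℝ) (Z : Set (En n)) : Prop :=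
  ∀ b : En n, (∀ i, a i ≤ b i ∧ b i + h ≤ a i + s) → (Z ∩ cube n b h).Nonempty

/-- `μ_d(f,z)`: max over `1 ≤ k ≤ d` of the order-`k` partial derivatives of `f` at `z`. -/
def muF (n d : ℕ) (f : En n → ℝ) (z : En n) : ℝ :=
  ⨆ k : {k : ℕ // 1 ≤ k ∧ k ≤ d}, partialMax n (k : ℕ) f z

/-- `μ_d(f)`: max over the unit ball of `μ_d(f,z)`. -/
def muFglob (n d : ℕ) (f : En n → ℝ) : ℝ :=
  ⨆ z : Metric.closedBall (0 : En n) 1, muF n d f (z : En n)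

/-- `M_m(g)` for a function of one variable on `[-1,1]`. -/
def MIcc (m : ℕ) (g : ℝ → ℝ) : ℝ :=
  ⨆ t : Set.Icc (-1 : ℝ) 1, |iteratedDeriv m g (t : ℝ)|

end

/-!
Differentiating `g = f ∘ ω` once gives `g' = Df(ω)[ω']`, and the Leibniz rule for this pairing
writes `g^{(m+1)}` as `D^m(Df ∘ ω)[ω']` plus terms each of which contains some `ω^{(j)}` with
`j ≥ 2`, hence a factor `ν_d(ω)`. Induction on `m`, applied to `Df` in place of `f`, bounds the
first term by the top derivative of `f`; the crude Faà di Bruno bound controls the remaining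
terms by the lower derivatives of `f`. Passing between operator norms and the maxima of partial
derivatives or coordinates used in the definitions only costs powers of `n`.
-/

open scoped Nat

universe u

section ChainRule

-- `E` and `G` share a universe because the induction replaces `G` by `E →L[ℝ] G`.
variable {E G : Type u} [NormedAddCommGroup E] [NormedSpace ℝ E]
  [NormedAddCommGroup G] [NormedSpace ℝ G]

theorem iteratedDeriv_succ_comp {m : ℕ} {F : E → G} {ω : ℝ → E}
    (hF : Differentiable ℝ F) (hω : Differentiable ℝ ω) :
    iteratedDeriv (m + 1) (F ∘ ω) = iteratedDeriv m (fun s => fderiv ℝ F (ω s) (deriv ω s)) := by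
  rw [iteratedDeriv_succ']
  congr 1
  ext s
  exact fderiv_comp_deriv s (hF _) (hω _)

theorem norm_iteratedFDeriv_fderiv_comp_le {i : ℕ} {F : E → G} {ω : ℝ → E} {t R B : ℝ}
    (hF : ContDiff ℝ (i + 1) F) (hω : ContDiff ℝ i ω) (hR : 1 ≤ R)
    (hB : ∀ k, 1 ≤ k → k ≤ i + 1 → ‖iteratedFDeriv ℝ k F (ω t)‖ ≤ B)
    (hωR : ∀ k, 1 ≤ k → k ≤ i → ‖iteratedDeriv k ω t‖ ≤ R) :
    ‖iteratedFDeriv ℝ i (fun s => fderiv ℝ F (ω s)) t‖ ≤ i ! * B * R ^ i := by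
  refine norm_iteratedFDeriv_comp_le (hF.fderiv_right le_rfl) hω le_rfl t (fun k hk => ?_)
    (fun k hk hki => ?_)
  · rw [norm_iteratedFDeriv_fderiv]
    exact hB (k + 1) (by omega) (by omega)
  · rw [norm_iteratedFDeriv_eq_norm_iteratedDeriv]
    exact (hωR k hk hki).trans (le_self_pow₀ hR (by omega))

theorem choose_mul_norm_iteratedFDeriv_fderiv_comp_mul_le {m i : ℕ} (hi : i < m) {F : E → G}
    {ω : ℝ → E} {t R B ν : ℝ} (hF : ContDiff ℝ m F) (hω : ContDiff ℝ m ω) (hR : 1 ≤ R)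
    (hB0 : 0 ≤ B) (hν : 0 ≤ ν) (hB : ∀ k, 1 ≤ k → k ≤ m → ‖iteratedFDeriv ℝ k F (ω t)‖ ≤ B)
    (hωR : ∀ k, 1 ≤ k → k ≤ m → ‖iteratedDeriv k ω t‖ ≤ R)
    (hων : ∀ k, 2 ≤ k → k ≤ m + 1 → ‖iteratedDeriv k ω t‖ ≤ R * ν) :
    m.choose i * ‖iteratedFDeriv ℝ i (fun s => fderiv ℝ F (ω s)) t‖ *
        ‖iteratedFDeriv ℝ (m - i) (deriv ω) t‖ ≤ m ! * R ^ (m + 1) * B * ν := by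
  have hu : ‖iteratedFDeriv ℝ i (fun s => fderiv ℝ F (ω s)) t‖ ≤ i ! * B * R ^ i :=
    norm_iteratedFDeriv_fderiv_comp_le (hF.of_le (by norm_cast)) (hω.of_le (by norm_cast; omega))
      hR (fun k hk hki => hB k hk (by omega)) (fun k hk hki => hωR k hk (by omega))
  have hv : ‖iteratedFDeriv ℝ (m - i) (deriv ω) t‖ ≤ R * ν := by
    rw [norm_iteratedFDeriv_eq_norm_iteratedDeriv, ← iteratedDeriv_succ']
    exact hων _ (by omega) (by omega)
  have hchoose : (m.choose i : ℝ) * i ! ≤ m ! := by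
    norm_cast
    rw [← Nat.choose_mul_factorial_mul_factorial hi.le]
    exact Nat.le_mul_of_pos_right _ (Nat.factorial_pos _)
  have hRi : R ^ (i + 1) ≤ R ^ (m + 1) := pow_le_pow_right₀ hR (by omega)
  calc _ ≤ m.choose i * (i ! * B * R ^ i) * (R * ν) := by gcongr
    _ = (m.choose i * i !) * R ^ (i + 1) * B * ν := by ring
    _ ≤ m ! * R ^ (m + 1) * B * ν := by gcongr

theorem norm_iteratedDeriv_comp_le (m : ℕ) {F : E → G} {ω : ℝ → E} {t R A B ν : ℝ}
    (hF : ContDiff ℝ m F) (hω : ContDiff ℝ m ω) (hR : 1 ≤ R) (hB0 : 0 ≤ B) (hν : 0 ≤ ν)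
    (hA : ‖iteratedFDeriv ℝ m F (ω t)‖ ≤ A)
    (hB : ∀ k, 1 ≤ k → k < m → ‖iteratedFDeriv ℝ k F (ω t)‖ ≤ B)
    (hωR : ∀ k, 1 ≤ k → k ≤ m → ‖iteratedDeriv k ω t‖ ≤ R)
    (hων : ∀ k, 2 ≤ k → k ≤ m → ‖iteratedDeriv k ω t‖ ≤ R * ν) :
    ‖iteratedDeriv m (F ∘ ω) t‖ ≤ R ^ m * (A + m ! * B * ν) := by
  induction m generalizing G F A with
  | zero => simpa using hA.trans (le_add_of_nonneg_right (mul_nonneg hB0 hν))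
  | succ m ih =>
    set u : ℝ → E →L[ℝ] G := fun s => fderiv ℝ F (ω s)
    have hu : ContDiff ℝ m u := (hF.fderiv_right le_rfl).comp (hω.of_le (by norm_cast; omega))
    have top : ‖iteratedFDeriv ℝ m u t‖ ≤ R ^ m * (A + m ! * B * ν) := by
      rw [norm_iteratedFDeriv_eq_norm_iteratedDeriv]
      refine ih (hF.fderiv_right le_rfl) (hω.of_le (by norm_cast; omega)) ?_ (fun k hk hkm => ?_)
        (fun k hk hkm => hωR k hk (by omega)) (fun k hk hkm => hων k hk (by omega))
      · rwa [norm_iteratedFDeriv_fderiv]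
      · rw [norm_iteratedFDeriv_fderiv]
        exact hB (k + 1) (by omega) (by omega)
    have low : ∀ i ∈ Finset.range m,
        (m.choose i : ℝ) * ‖iteratedFDeriv ℝ i u t‖ * ‖iteratedFDeriv ℝ (m - i) (deriv ω) t‖ ≤
          m ! * R ^ (m + 1) * B * ν := fun i hi =>
      choose_mul_norm_iteratedFDeriv_fderiv_comp_mul_le (Finset.mem_range.mp hi)
        (hF.of_le (by norm_cast; omega)) (hω.of_le (by norm_cast; omega)) hR hB0 hν
        (fun k hk hkm => hB k hk (by omega)) (fun k hk hkm => hωR k hk (by omega)) hων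
    rw [iteratedDeriv_succ_comp (hF.differentiable (by simp)) (hω.differentiable (by simp)),
      ← norm_iteratedFDeriv_eq_norm_iteratedDeriv]
    calc _ ≤ ∑ i ∈ Finset.range (m + 1), (m.choose i : ℝ) * ‖iteratedFDeriv ℝ i u t‖ *
            ‖iteratedFDeriv ℝ (m - i) (deriv ω) t‖ :=
          norm_iteratedFDeriv_clm_apply hu hω.deriv' t le_rfl
      _ ≤ m * (m ! * R ^ (m + 1) * B * ν) + R ^ m * (A + m ! * B * ν) * R := by
        rw [Finset.sum_range_succ, Nat.choose_self, Nat.cast_one, one_mul, Nat.sub_self,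
          norm_iteratedFDeriv_zero]
        refine add_le_add (by simpa using Finset.sum_le_card_nsmul _ _ _ low) ?_
        exact mul_le_mul top (by simpa using hωR 1 le_rfl (by omega)) (norm_nonneg _)
          ((norm_nonneg _).trans top)
      _ = R ^ (m + 1) * (A + (m + 1)! * B * ν) := by
        push_cast [Nat.factorial_succ]
        ring

end ChainRule

open Set Metric

theorem IsCompact.le_iSup_of_le_continuousOn {X : Type*} [TopologicalSpace X] {K : Set X}
    (hK : IsCompact K) {f g : X → ℝ} (hg : ContinuousOn g K) (hfg : ∀ x ∈ K, f x ≤ g x)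
    {x : X} (hx : x ∈ K) : f x ≤ ⨆ y : K, f y := by
  refine le_ciSup (f := fun y : K => f y) ⟨sSup (g '' K), ?_⟩ ⟨x, hx⟩
  rintro _ ⟨y, rfl⟩
  exact (hfg y y.2).trans (le_csSup (hK.bddAbove_image hg) (mem_image_of_mem g y.2))

theorem ContinuousMultilinearMap.norm_le_card_pow_mul {ι G : Type*} [Fintype ι] [DecidableEq ι]
    [NormedAddCommGroup G] [NormedSpace ℝ G] {m : ℕ}
    (T : ContinuousMultilinearMap ℝ (fun _ : Fin m => EuclideanSpace ℝ ι) G) {P : ℝ} (hP0 : 0 ≤ P)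
    (hP : ∀ α : Fin m → ι, ‖T (fun j => EuclideanSpace.single (α j) 1)‖ ≤ P) :
    ‖T‖ ≤ Fintype.card ι ^ m * P := by
  refine T.opNorm_le_bound (by positivity) fun v => ?_
  have hexpand : T v = ∑ α : Fin m → ι,
      (∏ j, v j (α j)) • T (fun j => EuclideanSpace.single (α j) 1) := by
    conv_lhs => rw [show v = fun j => ∑ i, v j i • EuclideanSpace.single i (1 : ℝ) from
      funext fun j => by simpa using ((EuclideanSpace.basisFun ι ℝ).sum_repr (v j)).symm]
    rw [T.map_sum]
    exact Finset.sum_congr rfl fun α _ => T.map_smul_univ _ _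
  calc ‖T v‖ ≤ ∑ α : Fin m → ι, (∏ j, |v j (α j)|) * P := by
        rw [hexpand]
        refine (norm_sum_le _ _).trans (Finset.sum_le_sum fun α _ => ?_)
        rw [norm_smul, Real.norm_eq_abs, Finset.abs_prod]
        exact mul_le_mul_of_nonneg_left (hP α) (by positivity)
    _ = (∏ j, ∑ i, |v j i|) * P := by rw [Fintype.prod_sum, Finset.sum_mul]
    _ ≤ (∏ j, (Fintype.card ι * ‖v j‖)) * P := by
        gcongr with j
        calc ∑ i, |v j i| ≤ ∑ _i : ι, ‖v j‖ :=
              Finset.sum_le_sum fun i _ => PiLp.norm_apply_le (v j) i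
          _ = Fintype.card ι * ‖v j‖ := by rw [Finset.sum_const, Finset.card_univ, nsmul_eq_mul]
    _ = Fintype.card ι ^ m * P * ∏ j, ‖v j‖ := by
        rw [Finset.prod_mul_distrib, Finset.prod_const, Finset.card_univ, Fintype.card_fin]
        ring

variable {n : ℕ}

theorem partialMax_nonneg (l : ℕ) (f : En n → ℝ) (z : En n) : 0 ≤ partialMax n l f z :=
  Real.iSup_nonneg fun _ => abs_nonneg _

theorem partialMax_le_norm (l : ℕ) (f : En n → ℝ) (z : En n) :
    partialMax n l f z ≤ ‖iteratedFDeriv ℝ l f z‖ :=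
  Real.iSup_le (fun α => by
      simpa using (iteratedFDeriv ℝ l f z).le_opNorm fun j => EuclideanSpace.single (α j) (1 : ℝ))
    (norm_nonneg _)

theorem norm_iteratedFDeriv_le_pow_mul_partialMax (l : ℕ) (f : En n → ℝ) (z : En n) :
    ‖iteratedFDeriv ℝ l f z‖ ≤ n ^ l * partialMax n l f z := by
  simpa using (iteratedFDeriv ℝ l f z).norm_le_card_pow_mul (partialMax_nonneg l f z)
    fun α => le_ciSup (f := fun α : Fin l → Fin n =>
      |iteratedFDeriv ℝ l f z (fun j => EuclideanSpace.single (α j) (1 : ℝ))|)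
      (finite_range _).bddAbove α

theorem partialMax_le_Ml {l : ℕ} {f : En n → ℝ} (hf : ContDiff ℝ l f) {z : En n}
    (hz : z ∈ closedBall (0 : En n) 1) : partialMax n l f z ≤ Ml n l f :=
  IsCompact.le_iSup_of_le_continuousOn (isCompact_closedBall _ _)
    (hf.continuous_iteratedFDeriv le_rfl).norm.continuousOn
    (fun y _ => partialMax_le_norm l f y) hz

theorem partialMax_le_muFglob {d k : ℕ} (hk1 : 1 ≤ k) (hkd : k ≤ d) {f : En n → ℝ}
    (hf : ContDiff ℝ d f) {z : En n} (hz : z ∈ closedBall (0 : En n) 1) :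
    partialMax n k f z ≤ muFglob n d f := by
  have : Finite {k : ℕ // 1 ≤ k ∧ k ≤ d} := (finite_Icc 1 d).to_subtype
  refine (le_ciSup (f := fun k : {k : ℕ // 1 ≤ k ∧ k ≤ d} => partialMax n k f z)
    (finite_range _).bddAbove ⟨k, hk1, hkd⟩).trans ?_
  refine IsCompact.le_iSup_of_le_continuousOn (isCompact_closedBall _ _) (f := muF n d f)
    (g := fun y => ∑ k ∈ Finset.range (d + 1), ‖iteratedFDeriv ℝ k f y‖) ?_ (fun y _ => ?_) hz
  · exact (continuous_finsetSum _ fun k hk => (hf.continuous_iteratedFDeriv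
      (by norm_cast; exact Finset.mem_range_succ_iff.mp hk)).norm).continuousOn
  · refine Real.iSup_le (fun k => (partialMax_le_norm k f y).trans ?_) (by positivity)
    exact Finset.single_le_sum (fun k _ => norm_nonneg (iteratedFDeriv ℝ k f y))
      (Finset.mem_range_succ_iff.mpr k.2.2)

theorem muFglob_nonneg (d : ℕ) (f : En n → ℝ) : 0 ≤ muFglob n d f :=
  Real.iSup_nonneg fun _ => Real.iSup_nonneg fun _ => partialMax_nonneg _ _ _

theorem curveDer_nonneg (k : ℕ) (ω : ℝ → En n) (t : ℝ) : 0 ≤ curveDer n k ω t :=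
  Real.iSup_nonneg fun _ => abs_nonneg _

theorem nuCurve_nonneg (d : ℕ) (ω : ℝ → En n) : 0 ≤ nuCurve n d ω :=
  Real.iSup_nonneg fun _ => Real.iSup_nonneg fun _ => curveDer_nonneg _ _ _

theorem norm_iteratedDeriv_le_sqrt_mul_curveDer (k : ℕ) (ω : ℝ → En n) (t : ℝ) :
    ‖iteratedDeriv k ω t‖ ≤ √n * curveDer n k ω t := by
  simpa [curveDer, EuclideanSpace.inner_single_left] using
    (EuclideanSpace.basisFun (Fin n) ℝ).norm_le_card_mul_iSup_norm_inner (iteratedDeriv k ω t)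

theorem curveDer_le_nuCurve {d k : ℕ} (hk2 : 2 ≤ k) (hkd : k ≤ d + 1) {ω : ℝ → En n}
    (hω : ContDiff ℝ (d + 1) ω) {t : ℝ} (ht : t ∈ Icc (-1 : ℝ) 1) :
    curveDer n k ω t ≤ nuCurve n d ω := by
  have : Finite {k : ℕ // 2 ≤ k ∧ k ≤ d + 1} := (finite_Icc 2 (d + 1)).to_subtype
  refine (le_ciSup (f := fun k : {k : ℕ // 2 ≤ k ∧ k ≤ d + 1} => curveDer n k ω t)
    (finite_range _).bddAbove ⟨k, hk2, hkd⟩).trans ?_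
  refine IsCompact.le_iSup_of_le_continuousOn isCompact_Icc (f := nuAt n d ω)
    (g := fun s => ∑ k ∈ Finset.range (d + 2), ‖iteratedDeriv k ω s‖) ?_ (fun s _ => ?_) ht
  · exact (continuous_finsetSum _ fun k hk => (hω.continuous_iteratedDeriv k
      (by norm_cast; exact Finset.mem_range_succ_iff.mp hk)).norm).continuousOn
  · refine Real.iSup_le (fun k => ?_) (by positivity)
    refine (Real.iSup_le (fun i => ?_) (norm_nonneg _)).trans
      (Finset.single_le_sum (fun k _ => norm_nonneg (iteratedDeriv k ω s))
        (Finset.mem_range_succ_iff.mpr k.2.2))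
    simpa using PiLp.norm_apply_le (iteratedDeriv k ω s) i

theorem abs_iteratedDeriv_comp_le {d : ℕ} (hn : 1 ≤ n) {f : En n → ℝ}
    (hf : ContDiff ℝ (d + 1 : ℕ) f) {ω : ℝ → En n} (hω : ContDiff ℝ (d + 1 : ℕ) ω)
    (hball : ∀ t ∈ Icc (-1 : ℝ) 1, ω t ∈ closedBall (0 : En n) 1)
    (hspeed : ∀ t ∈ Icc (-1 : ℝ) 1, curveDer n 1 ω t ≤ 1) (hnu : nuCurve n d ω ≤ 1)
    {t : ℝ} (ht : t ∈ Icc (-1 : ℝ) 1) :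
    |iteratedDeriv (d + 1) (fun u => f (ω u)) t| ≤
      √n ^ (d + 1) * (n ^ (d + 1) * Ml n (d + 1) f +
        (d + 1)! * (n ^ d * muFglob n d f) * nuCurve n d ω) := by
  have hn1 : (1 : ℝ) ≤ n := by exact_mod_cast hn
  have hcurveDer : ∀ k, 1 ≤ k → k ≤ d + 1 → curveDer n k ω t ≤ 1 := fun k hk1 hkd =>
    hk1.eq_or_lt.elim (fun h => h ▸ hspeed t ht)
      fun h => (curveDer_le_nuCurve h hkd hω ht).trans hnu
  rw [← Real.norm_eq_abs]
  refine norm_iteratedDeriv_comp_le (d + 1) hf hω (Real.one_le_sqrt.mpr hn1)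
    (mul_nonneg (by positivity) (muFglob_nonneg d f)) (nuCurve_nonneg d ω) ?_
    (fun k hk1 hkd => ?_) (fun k hk1 hkd => ?_) (fun k hk2 hkd => ?_)
  · exact (norm_iteratedFDeriv_le_pow_mul_partialMax _ f _).trans
      (mul_le_mul_of_nonneg_left (partialMax_le_Ml hf (hball t ht)) (by positivity))
  · exact (norm_iteratedFDeriv_le_pow_mul_partialMax k f _).trans
      (mul_le_mul (pow_le_pow_right₀ hn1 (by omega))
        (partialMax_le_muFglob hk1 (by omega) (hf.of_le (by norm_cast; omega)) (hball t ht))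
        (partialMax_nonneg _ _ _) (by positivity))
  · exact (norm_iteratedDeriv_le_sqrt_mul_curveDer k ω t).trans
      (mul_le_of_le_one_right (Real.sqrt_nonneg _) (hcurveDer k hk1 hkd))
  · exact (norm_iteratedDeriv_le_sqrt_mul_curveDer k ω t).trans
      (mul_le_mul_of_nonneg_left (curveDer_le_nuCurve hk2 hkd hω ht) (Real.sqrt_nonneg _))

theorem stmt9_general (n d : ℕ) (hn : 1 ≤ n) :
    ∃ C₁ C₂ : ℝ, 0 < C₁ ∧ 0 < C₂ ∧
      ∀ f : En n → ℝ, ContDiff ℝ (d + 1 : ℕ) f →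
        ∀ ω : ℝ → En n, ContDiff ℝ (d + 1 : ℕ) ω →
          (∀ t ∈ Set.Icc (-1 : ℝ) 1, ω t ∈ Metric.closedBall (0 : En n) 1) →
          (∀ t ∈ Set.Icc (-1 : ℝ) 1, 0 < curveDer n 1 ω t ∧ curveDer n 1 ω t ≤ 1) →
          nuCurve n d ω ≤ 1 →
          Ml n (d + 1) f ≥
            C₁ * (MIcc (d + 1) (fun u => f (ω u)) - C₂ * muFglob n d f * nuCurve n d ω) := by
  have hn0 : (0 : ℝ) < n := by exact_mod_cast hn
  have hK : 0 < √n ^ (d + 1) * n ^ (d + 1) := by positivity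
  refine ⟨(√n ^ (d + 1) * n ^ (d + 1))⁻¹, √n ^ (d + 1) * n ^ d * (d + 1)!, inv_pos.mpr hK,
    by positivity, fun f hf ω hω hball hspeed hnu => ?_⟩
  have hg : MIcc (d + 1) (fun u => f (ω u)) ≤ √n ^ (d + 1) * n ^ (d + 1) * Ml n (d + 1) f +
      √n ^ (d + 1) * n ^ d * (d + 1)! * muFglob n d f * nuCurve n d ω := by
    have : Nonempty (Icc (-1 : ℝ) 1) := ⟨⟨0, by norm_num⟩⟩
    exact ciSup_le fun t => (abs_iteratedDeriv_comp_le hn hf hω hball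
      (fun s hs => (hspeed s hs).2) hnu t.2).trans_eq (by ring)
  rw [ge_iff_le, inv_mul_le_iff₀ hK]
  linarith

/-- there are `C₁(n,d), C₂(n,d) > 0` such that for every `C^{d+1}` function `f`
on `B^n` and admissible curve `ω`, with `g = f ∘ ω`,
`M_{d+1}(f) ≥ C₁·(M_{d+1}(g) − C₂·μ_d(f)·ν_d(ω))`. -/
theorem stmt9 (n d : ℕ) (hn : 1 ≤ n) (hd : 1 ≤ d) :
    ∃ C₁ C₂ : ℝ, 0 < C₁ ∧ 0 < C₂ ∧
      ∀ f : En n → ℝ, ContDiff ℝ (d + 1 : ℕ) f →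
        ∀ ω : ℝ → En n, ContDiff ℝ (d + 1 : ℕ) ω →
          (∀ t ∈ Set.Icc (-1 : ℝ) 1, ω t ∈ Metric.closedBall (0 : En n) 1) →
          (∀ t ∈ Set.Icc (-1 : ℝ) 1, 0 < curveDer n 1 ω t ∧ curveDer n 1 ω t ≤ 1) →
          nuCurve n d ω ≤ 1 →
          Ml n (d + 1) f ≥
            C₁ * (MIcc (d + 1) (fun u => f (ω u)) - C₂ * muFglob n d f * nuCurve n d ω) :=
  stmt9_general n d hn
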